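/- Let n ≥ 2, α ∈ [−1, 0), R > 0, T > 0 and c > 1. Define Ψ̄(x,t) = C_α ( (T − ct)/(|x|² + R²) )^{1/α}, where C_α > 0 satisfies C_α^α = 2 n^{α−1}(n − 2/α). Then for all x ∈ ℝⁿ and 0 ≤ t < T/c one has the identity ∂_t Ψ̄ − Σ_i ∂_{x_i}( n^{α−1} Ψ̄^{−α} ∂_{x_i} Ψ̄ ) = [ c + nα/(2−nα) − (2/(2−nα)) · |x|²/(|x|²+R²) ] · (−Ψ̄)/(α(T−ct)), and consequently ∂_t Ψ̄ − Σ_i ∂_{x_i}( n^{α−1} Ψ̄^{−α} ∂_{x_i} Ψ̄ ) > (c−1) · (−Ψ̄)/(α(T−ct)) > 0; that is, Ψ̄ is a strict supersolution of the porous medium equation on ℝⁿ × [0, T/c). -/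

import Mathlib

/-! The barrier separates as `Ψ̄(x,t) = a(t) w(x)^p` with `w = |x|² + R²`, `p = -1/α` and
`a(t) = C_α (T - ct)^{1/α}`. Since `p·(-α) = 1`, the flux `n^{α-1} Ψ̄^{-α} ∇Ψ̄` is a constant
multiple of `w^p x`, whose divergence is `w^{p-1}(n w + 2p|x|²)`; the normalisation of `C_α`
turns `n^{α-1} a^{-α}` into `1 / (2(n - 2/α)(T - ct))`. Together with
`∂_t Ψ̄ = -c Ψ̄ / (α(T - ct))` this gives the identity, and the bracket exceeds `c - 1` by
`2R² / ((2 - nα)(|x|² + R²)) > 0`. -/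

noncomputable def pd {n : ℕ} (i : Fin n) (f : EuclideanSpace ℝ (Fin n) → ℝ)
    (x : EuclideanSpace ℝ (Fin n)) : ℝ :=
  fderiv ℝ f x (EuclideanSpace.single i (1 : ℝ))

section SpatialDerivatives

variable {n : ℕ} {f : EuclideanSpace ℝ (Fin n) → ℝ} {y : EuclideanSpace ℝ (Fin n)}

theorem HasFDerivAt.pd_eq {f' : EuclideanSpace ℝ (Fin n) →L[ℝ] ℝ} (hf : HasFDerivAt f f' y)
    (i : Fin n) : pd i f y = f' (EuclideanSpace.single i 1) := by
  rw [pd, hf.fderiv]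

theorem hasFDerivAt_norm_sq_add_rpow {E : Type*} [NormedAddCommGroup E] [InnerProductSpace ℝ E]
    {r : ℝ} (p : ℝ) {y : E} (hy : ‖y‖ ^ 2 + r ≠ 0) :
    HasFDerivAt (fun z : E => (‖z‖ ^ 2 + r) ^ p)
      ((p * (‖y‖ ^ 2 + r) ^ (p - 1)) • (2 • innerSL ℝ y)) y :=
  ((hasStrictFDerivAt_norm_sq y).hasFDerivAt.add_const r).rpow_const (Or.inl hy)

theorem pd_const_mul_norm_sq_add_rpow {r : ℝ} (b p : ℝ) (hy : ‖y‖ ^ 2 + r ≠ 0) (i : Fin n) :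
    pd i (fun z => b * (‖z‖ ^ 2 + r) ^ p) y = 2 * b * p * (‖y‖ ^ 2 + r) ^ (p - 1) * y i := by
  rw [((hasFDerivAt_norm_sq_add_rpow p hy).const_mul b).pd_eq]
  simp only [smul_apply, coe_innerSL_apply, EuclideanSpace.inner_single_right, Real.ringHom_apply,
    one_mul, nsmul_eq_mul, Nat.cast_ofNat, smul_eq_mul]
  ring

theorem pd_const_mul_norm_sq_add_rpow_mul_apply {r : ℝ} (b p : ℝ) (hy : ‖y‖ ^ 2 + r ≠ 0)
    (i : Fin n) :
    pd i (fun z => b * ((‖z‖ ^ 2 + r) ^ p * z i)) y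
      = b * ((‖y‖ ^ 2 + r) ^ p + 2 * p * (‖y‖ ^ 2 + r) ^ (p - 1) * y i ^ 2) := by
  have hproj : HasFDerivAt (fun z : EuclideanSpace ℝ (Fin n) => z i)
      (EuclideanSpace.proj (𝕜 := ℝ) i) y :=
    (EuclideanSpace.proj (𝕜 := ℝ) i).hasFDerivAt
  rw [(((hasFDerivAt_norm_sq_add_rpow p hy).fun_mul hproj).const_mul b).pd_eq]
  simp only [smul_add, add_apply, smul_apply, PiLp.proj_apply, PiLp.single_eq_same, smul_eq_mul,
    mul_one, coe_innerSL_apply, EuclideanSpace.inner_single_right, Real.ringHom_apply, one_mul,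
    nsmul_eq_mul, Nat.cast_ofNat]
  ring

theorem sum_pd_const_mul_norm_sq_add_rpow_mul_apply {r : ℝ} (b p : ℝ) (hy : ‖y‖ ^ 2 + r ≠ 0) :
    ∑ i, pd i (fun z => b * ((‖z‖ ^ 2 + r) ^ p * z i)) y
      = b * (n * (‖y‖ ^ 2 + r) ^ p + 2 * p * (‖y‖ ^ 2 + r) ^ (p - 1) * ‖y‖ ^ 2) := by
  simp only [pd_const_mul_norm_sq_add_rpow_mul_apply b p hy, ← Finset.mul_sum,
    Finset.sum_add_distrib, ← EuclideanSpace.real_norm_sq_eq, Finset.sum_const,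
    Finset.card_univ, Fintype.card_fin, nsmul_eq_mul]

end SpatialDerivatives

theorem Real.mul_rpow_mul_rpow_sub_one {a w p β : ℝ} (ha : 0 ≤ a) (hw : 0 < w) (h : p * β = 1) :
    (a * w ^ p) ^ β * w ^ (p - 1) = a ^ β * w ^ p := by
  rw [Real.mul_rpow ha (Real.rpow_nonneg hw.le _), ← Real.rpow_mul hw.le, h, Real.rpow_one,
    Real.rpow_sub_one hw.ne']
  field_simp

theorem hasDerivAt_const_mul_sub_mul_div_rpow {C T c q γ t : ℝ} (hs : T - c * t ≠ 0)
    (hq : q ≠ 0) :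
    HasDerivAt (fun s => C * ((T - c * s) / q) ^ γ)
      (-(c * γ) / (T - c * t) * (C * ((T - c * t) / q) ^ γ)) t := by
  have hu : HasDerivAt (fun s => (T - c * s) / q) (-c / q) t := by
    simpa using ((hasDerivAt_id t).const_mul c).const_sub T |>.div_const q
  refine ((hu.rpow_const (p := γ) (Or.inl (div_ne_zero hs hq))).const_mul C).congr_deriv ?_
  rw [Real.rpow_sub_one (div_ne_zero hs hq)]
  field_simp

theorem mul_mul_rpow_one_div_rpow_neg_of_rpow_eq {N m C α s : ℝ} (hC : 0 < C) (hs : 0 < s)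
    (hα : α ≠ 0) (hCα : C ^ α = 2 * N * m) :
    N * (C * s ^ (1 / α)) ^ (-α) = 1 / (2 * m * s) := by
  have hNm : 2 * N * m ≠ 0 := hCα ▸ (Real.rpow_pos_of_pos hC α).ne'
  rw [Real.mul_rpow hC.le (Real.rpow_nonneg hs.le _), ← Real.rpow_mul hs.le,
    Real.rpow_neg hC.le, hCα, show 1 / α * -α = -1 by field_simp, Real.rpow_neg_one]
  obtain ⟨⟨-, hN⟩, hm⟩ := mul_ne_zero_iff.1 hNm |>.imp_left mul_ne_zero_iff.1
  field_simp

theorem two_sub_natCast_mul_pos (n : ℕ) {α : ℝ} (hα : α < 0) : 0 < 2 - n * α := by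
  nlinarith [(Nat.cast_nonneg n : (0 : ℝ) ≤ n)]

noncomputable def pmeOperator {n : ℕ} (α : ℝ) (Ψ : EuclideanSpace ℝ (Fin n) → ℝ → ℝ)
    (x : EuclideanSpace ℝ (Fin n)) (t : ℝ) : ℝ :=
  deriv (Ψ x) t -
    ∑ i, pd i (fun y => (n : ℝ) ^ (α - 1) * (Ψ y t) ^ (-α) * pd i (fun z => Ψ z t) y) x

theorem pmeOperator_barrier {n : ℕ} {α R T c Cα t : ℝ} (hα : α < 0) (hR : 0 < R)
    (hC : 0 < Cα) (hCα : Cα ^ α = 2 * (n : ℝ) ^ (α - 1) * ((n : ℝ) - 2 / α))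
    {Ψ : EuclideanSpace ℝ (Fin n) → ℝ → ℝ}
    (hΨ : ∀ x s, Ψ x s = Cα * ((T - c * s) / (‖x‖ ^ 2 + R ^ 2)) ^ (1 / α))
    (hs : 0 < T - c * t) (x : EuclideanSpace ℝ (Fin n)) :
    pmeOperator α Ψ x t =
      (c + n * α / (2 - n * α) - (2 / (2 - n * α)) * ‖x‖ ^ 2 / (‖x‖ ^ 2 + R ^ 2)) *
        (-(Ψ x t)) / (α * (T - c * t)) := by
  rw [pmeOperator]
  have hw : ∀ y : EuclideanSpace ℝ (Fin n), 0 < ‖y‖ ^ 2 + R ^ 2 := fun y => by positivity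
  set N : ℝ := (n : ℝ) ^ (α - 1)
  set a := Cα * (T - c * t) ^ (1 / α)
  set p := -(1 / α)
  have ha : 0 < a := by positivity
  have hsep : ∀ z, Ψ z t = a * (‖z‖ ^ 2 + R ^ 2) ^ p := fun z => by
    rw [hΨ, Real.div_rpow hs.le (hw z).le, Real.rpow_neg (hw z).le, div_eq_mul_inv, mul_assoc]
  have htime : deriv (Ψ x) t = -(c * (1 / α)) / (T - c * t) * Ψ x t := by
    rw [hΨ x t, ← (hasDerivAt_const_mul_sub_mul_div_rpow hs.ne' (hw x).ne').deriv]
    exact congrArg (deriv · t) (funext (hΨ x))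
  have hflux : ∀ i y, N * (Ψ y t) ^ (-α) * pd i (fun z => Ψ z t) y =
      (2 * p * (N * a ^ (-α)) * a) * ((‖y‖ ^ 2 + R ^ 2) ^ p * y i) := by
    intro i y
    simp only [hsep, pd_const_mul_norm_sq_add_rpow a p (hw y).ne']
    linear_combination (2 * a * p * N * y i) *
      Real.mul_rpow_mul_rpow_sub_one ha.le (hw y) (show -(1 / α) * -α = 1 by field_simp [hα.ne])
  simp only [hflux]
  rw [htime, sum_pd_const_mul_norm_sq_add_rpow_mul_apply _ p (hw x).ne',
    mul_mul_rpow_one_div_rpow_neg_of_rpow_eq hC hs hα.ne hCα, hsep x,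
    Real.rpow_sub_one (hw x).ne']
  rw [show (n : ℝ) - 2 / α = -(2 - n * α) / α by field_simp [hα.ne]; ring]
  simp only [p]
  field_simp [hα.ne, (two_sub_natCast_mul_pos n hα).ne']
  ring

theorem sub_one_lt_barrier_bracket {n α c u R : ℝ} (hnα : 0 < 2 - n * α) (hu : 0 ≤ u)
    (hR : 0 < R) : c - 1 < c + n * α / (2 - n * α) - (2 / (2 - n * α)) * u / (u + R ^ 2) := by
  have hgap : c + n * α / (2 - n * α) - (2 / (2 - n * α)) * u / (u + R ^ 2) - (c - 1) =
      2 * R ^ 2 / ((2 - n * α) * (u + R ^ 2)) := by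
    field_simp
    ring
  rw [← sub_pos, hgap]
  positivity

theorem pme_barrier_supersolution_general (n : ℕ) (α R T c : ℝ)
    (hα : -1 ≤ α ∧ α < 0) (hR : 0 < R) (hc : 1 < c)
    (Cα : ℝ) (hCpos : 0 < Cα)
    (hCα : Cα ^ α = 2 * (n : ℝ) ^ (α - 1) * ((n : ℝ) - 2 / α))
    (Ψ : EuclideanSpace ℝ (Fin n) → ℝ → ℝ)
    (hΨ : ∀ x s, Ψ x s = Cα * ((T - c * s) / (‖x‖ ^ 2 + R ^ 2)) ^ (1 / α)) :
    ∀ (x : EuclideanSpace ℝ (Fin n)) (t : ℝ), 0 ≤ t → t < T / c →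
      (deriv (Ψ x) t -
          ∑ i, pd i (fun y =>
            (n : ℝ) ^ (α - 1) * (Ψ y t) ^ (-α) * pd i (fun z => Ψ z t) y) x =
        (c + n * α / (2 - n * α) -
            (2 / (2 - n * α)) * ‖x‖ ^ 2 / (‖x‖ ^ 2 + R ^ 2)) *
          (-(Ψ x t)) / (α * (T - c * t))) ∧
      (deriv (Ψ x) t -
          ∑ i, pd i (fun y =>
            (n : ℝ) ^ (α - 1) * (Ψ y t) ^ (-α) * pd i (fun z => Ψ z t) y) x >
        (c - 1) * (-(Ψ x t)) / (α * (T - c * t))) ∧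
      ((c - 1) * (-(Ψ x t)) / (α * (T - c * t)) > 0) := by
  intro x t _ htc
  have hs : 0 < T - c * t := by
    rw [lt_div_iff₀ (by linarith)] at htc
    linarith
  have hΨpos : 0 < Ψ x t := by
    rw [hΨ]
    exact mul_pos hCpos (Real.rpow_pos_of_pos (div_pos hs (by positivity)) _)
  have hweight : 0 < -(Ψ x t) / (α * (T - c * t)) :=
    div_pos_of_neg_of_neg (by linarith) (mul_neg_of_neg_of_pos hα.2 hs)
  have hbracket :=
    sub_one_lt_barrier_bracket (c := c) (two_sub_natCast_mul_pos n hα.2) (sq_nonneg ‖x‖) hR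
  have hoperator := pmeOperator_barrier hα.2 hR hCpos hCα hΨ hs x
  refine ⟨hoperator, ?_, ?_⟩
  · change pmeOperator α Ψ x t > _
    rw [hoperator, gt_iff_lt]
    simpa only [mul_div_assoc] using mul_lt_mul_of_pos_right hbracket hweight
  · rw [mul_div_assoc]
    exact mul_pos (by linarith) hweight

/-- Supersolution barrier in the PME range `α ∈ [−1, 0)`, `n ≥ 2`, `c > 1`:
`Ψ̄(x,t) = C_α ((T−ct)/(|x|²+R²))^{1/α}` with `C_α^α = 2n^{α−1}(n−2/α)`
satisfies, for all `x` and `0 ≤ t < T/c`, the identity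
`∂_tΨ̄ − ∑_i ∂_{x_i}(n^{α−1}Ψ̄^{−α}∂_{x_i}Ψ̄)
  = [c + nα/(2−nα) − (2/(2−nα))|x|²/(|x|²+R²)]·(−Ψ̄)/(α(T−ct))`,
and consequently it is `> (c−1)(−Ψ̄)/(α(T−ct)) > 0`; i.e. `Ψ̄` is a strict
supersolution of the porous medium equation. -/
theorem pme_barrier_supersolution (n : ℕ) (hn : 2 ≤ n) (α R T c : ℝ)
    (hα : -1 ≤ α ∧ α < 0) (hR : 0 < R) (hT : 0 < T) (hc : 1 < c)
    (Cα : ℝ) (hCpos : 0 < Cα)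
    (hCα : Cα ^ α = 2 * (n : ℝ) ^ (α - 1) * ((n : ℝ) - 2 / α))
    (Ψ : EuclideanSpace ℝ (Fin n) → ℝ → ℝ)
    (hΨ : ∀ x s, Ψ x s = Cα * ((T - c * s) / (‖x‖ ^ 2 + R ^ 2)) ^ (1 / α)) :
    ∀ (x : EuclideanSpace ℝ (Fin n)) (t : ℝ), 0 ≤ t → t < T / c →
      (deriv (Ψ x) t -
          ∑ i, pd i (fun y =>
            (n : ℝ) ^ (α - 1) * (Ψ y t) ^ (-α) * pd i (fun z => Ψ z t) y) x =
        (c + n * α / (2 - n * α) -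
            (2 / (2 - n * α)) * ‖x‖ ^ 2 / (‖x‖ ^ 2 + R ^ 2)) *
          (-(Ψ x t)) / (α * (T - c * t))) ∧
      (deriv (Ψ x) t -
          ∑ i, pd i (fun y =>
            (n : ℝ) ^ (α - 1) * (Ψ y t) ^ (-α) * pd i (fun z => Ψ z t) y) x >
        (c - 1) * (-(Ψ x t)) / (α * (T - c * t))) ∧
      ((c - 1) * (-(Ψ x t)) / (α * (T - c * t)) > 0) :=
  pme_barrier_supersolution_general n α R T c hα hR hc Cα hCpos hCα Ψ hΨ
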